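/- In the frontdoor-style ADMG with vertices {Z_1, Z_2, Z_3, X_1, X_2}, directed edges Z_3→Z_1, Z_1→Z_2, X_1→Z_1, Z_1→X_2, and bidirected edges Z_3↔Z_1, Z_1↔Z_2, X_1↔X_2, any two strictly positive SCMs P and Q inducing this graph that satisfy P(z_1,z_2,z_3 | x_1) = Q(z_1,z_2,z_3 | do(x_1)) and P(x_1,x_2,z_1,z_3) = Q(x_1,x_2,z_1,z_3) must satisfy P(x_1,x_2,z_1,z_2,z_3) = Q(x_1,x_2,z_1,z_2,z_3). -/

import Mathlib

open Classical

noncomputable section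

/-- An acyclic directed mixed graph (ADMG): directed edges (causal) and
bidirected edges (latent confounders). -/
structure ADMG (V : Type) where
  dir : V → V → Prop
  bidir : V → V → Prop
  bidir_symm : ∀ a b, bidir a b → bidir b a
  acyclic : ∀ v, ¬ Relation.TransGen dir v v

namespace ADMG

variable {V : Type} [Fintype V] [DecidableEq V]

/-- Observed parents of a set `W`, outside `W`. -/
def parents (G : ADMG V) (W : Set V) : Set V :=
  {v | v ∉ W ∧ ∃ w ∈ W, G.dir v w}

/-- Observed parents of a finite set `W`, outside `W`. -/
def parentsF (G : ADMG V) (W : Finset V) : Finset V :=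
  Finset.univ.filter fun v => v ∉ W ∧ ∃ w ∈ W, G.dir v w

/-- Ancestors of a set `W` (including `W` itself). -/
def ancestors (G : ADMG V) (W : Set V) : Set V :=
  {v | ∃ w ∈ W, Relation.ReflTransGen G.dir v w}

/-- Ancestors of a finite set `W` (including `W` itself). -/
def ancestorsF (G : ADMG V) (W : Finset V) : Finset V :=
  Finset.univ.filter fun v => ∃ w ∈ W, Relation.ReflTransGen G.dir v w

/-- Bidirected connectivity (paths of bidirected edges). -/
def biConn (G : ADMG V) (a b : V) : Prop :=
  Relation.ReflTransGen G.bidir a b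

/-- `C` is a c-component of `G`: a maximal bidirected-connected set. -/
def isCComponent (G : ADMG V) (C : Set V) : Prop :=
  C.Nonempty ∧ (∀ a ∈ C, ∀ b ∈ C, G.biConn a b) ∧
    ∀ a ∈ C, ∀ b, G.biConn a b → b ∈ C

/-- The set of c-components of `G`. -/
def cComponents (G : ADMG V) : Set (Set V) := {C | G.isCComponent C}

/-- The graph after `do(I)`: incoming directed edges into `I` and bidirected
edges incident to `I` are removed. -/
def doGraph (G : ADMG V) (I : Set V) : ADMG V where
  dir a b := G.dir a b ∧ b ∉ I
  bidir a b := G.bidir a b ∧ a ∉ I ∧ b ∉ I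
  bidir_symm := fun a b h => ⟨G.bidir_symm a b h.1, h.2.2, h.2.1⟩
  acyclic := fun v h => G.acyclic v (Relation.TransGen.mono (fun _ _ hx => hx.1) v v h)

/-- The graph with all outgoing directed edges of `X` removed. -/
def underGraph (G : ADMG V) (X : Set V) : ADMG V where
  dir a b := G.dir a b ∧ a ∉ X
  bidir := G.bidir
  bidir_symm := G.bidir_symm
  acyclic := fun v h => G.acyclic v (Relation.TransGen.mono (fun _ _ hx => hx.1) v v h)

/-- The induced sub-graph on a vertex set `S`. -/
def induced (G : ADMG V) (S : Set V) : ADMG V where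
  dir a b := G.dir a b ∧ a ∈ S ∧ b ∈ S
  bidir a b := G.bidir a b ∧ a ∈ S ∧ b ∈ S
  bidir_symm := fun a b h => ⟨G.bidir_symm a b h.1, h.2.2, h.2.1⟩
  acyclic := fun v h => G.acyclic v (Relation.TransGen.mono (fun _ _ hx => hx.1) v v h)

/-- Adjacency in the mixed graph. -/
def adjacent (G : ADMG V) (a b : V) : Prop := G.dir a b ∨ G.dir b a ∨ G.bidir a b

/-- The edge between `a` and `b` points into `b`. -/
def intoEdge (G : ADMG V) (a b : V) : Prop := G.dir a b ∨ G.bidir a b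

/-- `b` is a collider on the consecutive triple `a, b, c`. -/
def isCollider (G : ADMG V) (a b c : V) : Prop := G.intoEdge a b ∧ G.intoEdge c b

/-- A walk (list of vertices) that is active given the conditioning set `Z`:
non-colliders avoid `Z`, colliders have a descendant in `Z`. -/
def ActiveWalk (G : ADMG V) (Z : Set V) (p : List V) : Prop :=
  p.Chain' G.adjacent ∧
    ∀ i a b c, p[i]? = some a → p[i + 1]? = some b → p[i + 2]? = some c →
      (G.isCollider a b c → ∃ z ∈ Z, Relation.ReflTransGen G.dir b z) ∧
      (¬ G.isCollider a b c → b ∉ Z)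

/-- d-connection of `X` and `Y` given `Z` in the mixed graph (m-connection). -/
def dConnected (G : ADMG V) (X Y Z : Set V) : Prop :=
  ∃ p : List V, G.ActiveWalk Z p ∧
    (∃ x ∈ X, p.head? = some x) ∧ ∃ y ∈ Y, p.getLast? = some y

/-- d-separation of `X` and `Y` given `Z`. -/
def dSeparated (G : ADMG V) (X Y Z : Set V) : Prop := ¬ G.dConnected X Y Z

end ADMG

/-- A (semi-Markovian) structural causal model over the ADMG `G`, with observed
variables valued in `Val`: independent finite latents `L`, mechanisms `f`
reading only observed parents and own latents (shared latents forcing a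
bidirected edge), and the solution map of the structural equations under an
intervention. -/
structure SCM (V : Type) (Val : Type) [Fintype V] [DecidableEq V] [Fintype Val]
    (G : ADMG V) where
  L : Type
  [fintL : Fintype L]
  [decL : DecidableEq L]
  NVal : Type
  [fintN : Fintype NVal]
  ν : L → NVal → ℝ
  ν_nonneg : ∀ l x, 0 ≤ ν l x
  ν_sum : ∀ l, ∑ x, ν l x = 1
  reads : V → L → Prop
  semiMarkov : ∀ v w l, v ≠ w → reads v l → reads w l → G.bidir v w
  f : V → (V → Val) → (L → NVal) → Val
  f_parents : ∀ v x y ω, (∀ p, G.dir p v → x p = y p) → f v x ω = f v y ω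
  f_latents : ∀ v x ω ω', (∀ l, reads v l → ω l = ω' l) → f v x ω = f v x ω'
  solve : Finset V → (V → Val) → (L → NVal) → V → Val
  solve_spec : ∀ I x ω v,
    solve I x ω v = if v ∈ I then x v else f v (solve I x ω) ω

namespace SCM

attribute [instance] SCM.fintL SCM.decL SCM.fintN

variable {V Val : Type} [Fintype V] [DecidableEq V] [Fintype Val] {G : ADMG V}

/-- Probability of a full latent configuration (latents are independent). -/
def μ (M : SCM V Val G) (ω : M.L → M.NVal) : ℝ := ∏ l, M.ν l (ω l)

/-- The interventional distribution `P(y | do(I := x))` (observational for `I = ∅`). -/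
def P (M : SCM V Val G) (I : Finset V) (x : V → Val) (y : V → Val) : ℝ :=
  ∑ ω : M.L → M.NVal, if M.solve I x ω = y then M.μ ω else 0

/-- The marginal interventional distribution `P(S = y|_S | do(I := x))`. -/
def Pm (M : SCM V Val G) (I : Finset V) (x : V → Val) (S : Finset V) (y : V → Val) : ℝ :=
  ∑ z : V → Val, if ∀ v ∈ S, z v = y v then M.P I x z else 0

/-- The conditional distribution `P(S = y|_S | C = y|_C, do(I := x))`. -/
def cond (M : SCM V Val G) (I : Finset V) (x : V → Val) (S C : Finset V)
    (y : V → Val) : ℝ :=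
  M.Pm I x (S ∪ C) y / M.Pm I x C y

/-- Strict positivity of the induced observational distribution. -/
def positive (M : SCM V Val G) : Prop := ∀ x y, 0 < M.P ∅ x y

end SCM

end


/-- The frontdoor-style ADMG on `{Z₁ = 0, Z₂ = 1, Z₃ = 2, X₁ = 3, X₂ = 4}` with
directed edges `Z₃ → Z₁`, `Z₁ → Z₂`, `X₁ → Z₁`, `Z₁ → X₂` and bidirected edges
`Z₃ ↔ Z₁`, `Z₁ ↔ Z₂`, `X₁ ↔ X₂`. -/
def G5 : ADMG (Fin 5) where
  dir a b := (a = 2 ∧ b = 0) ∨ (a = 0 ∧ b = 1) ∨ (a = 3 ∧ b = 0) ∨ (a = 0 ∧ b = 4)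
  bidir a b := (a = 2 ∧ b = 0) ∨ (a = 0 ∧ b = 2) ∨ (a = 0 ∧ b = 1) ∨ (a = 1 ∧ b = 0) ∨
    (a = 3 ∧ b = 4) ∨ (a = 4 ∧ b = 3)
  bidir_symm := by decide
  acyclic := by
    intro v h
    have h2 : Relation.TransGen
        (fun a b : Fin 5 => (![1, 2, 0, 0, 2] : Fin 5 → ℕ) a < ![1, 2, 0, 0, 2] b) v v :=
      Relation.TransGen.mono (show ∀ a b : Fin 5, _ → _ from by decide) v v h
    have htr : Transitive
        (fun a b : Fin 5 => (![1, 2, 0, 0, 2] : Fin 5 → ℕ) a < ![1, 2, 0, 0, 2] b) :=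
      fun _ _ _ hab hbc => lt_trans hab hbc
    haveI : IsTrans (Fin 5)
        (fun a b : Fin 5 => (![1, 2, 0, 0, 2] : Fin 5 → ℕ) a < ![1, 2, 0, 0, 2] b) :=
      ⟨fun _ _ _ hab hbc => htr hab hbc⟩
    rw [Relation.transGen_eq_self] at h2
    exact lt_irrefl _ h2

/-!
The latents of the two c-components `{Z₁, Z₂, Z₃}` and `{X₁, X₂}` are independent, so every
ancestral margin of either model factors into c-factors `Q[S]`: `P(v) = Q[Z₁Z₂Z₃] Q[X₁X₂]`,
`P(z₁, z₂, z₃, x₁) = Q[Z₁Z₂Z₃] Q[X₁]` and `P(x₁, x₂, z₁, z₃) = Q[Z₁Z₃] Q[X₁X₂]`, where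
`Q[Z₁Z₃] = ∑_{z₂} Q[Z₁Z₂Z₃]` because `Z₂` is childless. Conditioning on `x₁` divides out `Q[X₁]`,
so the first hypothesis says that the two models share `Q[Z₁Z₂Z₃]`, hence also `Q[Z₁Z₃]`; the
second then gives equal `Q[X₁X₂]` after cancelling `Q[Z₁Z₃] ≥ P(v) > 0`.
-/

noncomputable section

namespace ADMG

lemma wellFounded_dir {V : Type} [Finite V] (G : ADMG V) : WellFounded G.dir :=
  have : Std.Irrefl (Relation.TransGen G.dir) := ⟨G.acyclic⟩
  Subrelation.wf Relation.TransGen.single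
    (Finite.wellFounded_of_trans_of_irrefl (Relation.TransGen G.dir))

end ADMG

namespace SCM

variable {V Val : Type} [Fintype V] [DecidableEq V] [Fintype Val] {G : ADMG V}
  (M : SCM V Val G)

def prob (E : (M.L → M.NVal) → Prop) : ℝ := ∑ ω with E ω, M.μ ω

lemma μ_nonneg (ω : M.L → M.NVal) : 0 ≤ M.μ ω :=
  Finset.prod_nonneg fun l _ => M.ν_nonneg l (ω l)

lemma prob_true : M.prob (fun _ => True) = 1 := by
  simp only [prob, Finset.filter_true, μ, ← Fintype.prod_sum (fun l x => M.ν l x), M.ν_sum,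
    Finset.prod_const_one]

lemma prob_mul_prob (E F : (M.L → M.NVal) → Prop) :
    M.prob E * M.prob F = ∑ q : (M.L → M.NVal) × (M.L → M.NVal),
      if E q.1 ∧ F q.2 then M.μ q.1 * M.μ q.2 else 0 := by
  simp only [prob, Finset.sum_filter, Finset.sum_mul_sum, Fintype.sum_prod_type,
    ite_zero_mul_ite_zero]

lemma prob_and_eq_mul (p : M.L → Prop) {E F : (M.L → M.NVal) → Prop}
    (hE : ∀ ω ω', (∀ l, p l → ω l = ω' l) → (E ω ↔ E ω'))
    (hF : ∀ ω ω', (∀ l, ¬ p l → ω l = ω' l) → (F ω ↔ F ω')) :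
    M.prob (fun ω => E ω ∧ F ω) = M.prob E * M.prob F := by
  -- exchanging the `p`-coordinates of two independent samples preserves the product measure
  let mix (a b : M.L → M.NVal) (l : M.L) : M.NVal := if p l then a l else b l
  have mix_mix (a b) : mix (mix a b) (mix b a) = a := by
    funext l; by_cases hl : p l <;> simp [mix, hl]
  have μ_mix (a b) : M.μ (mix a b) * M.μ (mix b a) = M.μ a * M.μ b := by
    simp only [μ, ← Finset.prod_mul_distrib]
    exact Finset.prod_congr rfl fun l _ => by by_cases hl : p l <;> simp [mix, hl, mul_comm]
  have E_mix (a b) : E (mix a b) ↔ E a := hE _ _ fun l hl => by simp [mix, hl]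
  have F_mix (a b) : F (mix b a) ↔ F a := hF _ _ fun l hl => by simp [mix, hl]
  have swap_involutive : Function.Involutive fun q : (M.L → M.NVal) × (M.L → M.NVal) =>
      (mix q.1 q.2, mix q.2 q.1) :=
    fun q => Prod.ext (mix_mix q.1 q.2) (mix_mix q.2 q.1)
  calc M.prob (fun ω => E ω ∧ F ω)
      = M.prob (fun ω => E ω ∧ F ω) * M.prob (fun _ => True) := by rw [prob_true, mul_one]
    _ = ∑ q : (M.L → M.NVal) × (M.L → M.NVal),
          if E q.1 ∧ F q.2 then M.μ q.1 * M.μ q.2 else 0 := by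
        rw [prob_mul_prob]
        refine Fintype.sum_bijective _ swap_involutive.bijective _ _ fun q => ?_
        simp only [E_mix, F_mix, μ_mix, and_true]
    _ = M.prob E * M.prob F := (M.prob_mul_prob E F).symm

lemma prob_mono {E F : (M.L → M.NVal) → Prop} (h : ∀ ω, E ω → F ω) : M.prob E ≤ M.prob F :=
  Finset.sum_le_sum_of_subset_of_nonneg (Finset.monotone_filter_right _ fun ω _ => h ω)
    fun ω _ _ => M.μ_nonneg ω

lemma sum_prob_and_eq {α : Type} [Fintype α] (E : (M.L → M.NVal) → Prop)
    (g : (M.L → M.NVal) → α) : ∑ a, M.prob (fun ω => E ω ∧ g ω = a) = M.prob E := by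
  simp only [prob, ← Finset.filter_filter]
  exact Finset.sum_fiberwise _ g M.μ

lemma P_eq_prob (I : Finset V) (x y : V → Val) :
    M.P I x y = M.prob fun ω => M.solve I x ω = y := by
  rw [P, prob, Finset.sum_filter]
  congr!

lemma Pm_eq_prob (I S : Finset V) (x y : V → Val) :
    M.Pm I x S y = M.prob fun ω => ∀ v ∈ S, M.solve I x ω v = y v := by
  simp only [Pm, P_eq_prob, prob]
  rw [← Finset.sum_filter, Finset.sum_fiberwise_eq_sum_filter]
  congr! 2
  simp

/-- Tian's c-factor `Q[S](y) = P(S = y_S | do(V \ S = y))`. -/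
def cFactor (S : Finset V) (y : V → Val) : ℝ := M.prob fun ω => ∀ v ∈ S, M.f v y ω = y v

lemma f_update_of_not_dir {v w : V} (h : ¬ G.dir v w) (y : V → Val) (c : Val)
    (ω : M.L → M.NVal) : M.f w (Function.update y v c) ω = M.f w y ω :=
  M.f_parents w _ _ ω fun p hp => Function.update_of_ne (by rintro rfl; exact h hp) c y

lemma solve_eq_f_of_parents {I : Finset V} {x y : V → Val} {ω : M.L → M.NVal} {v : V}
    (hv : v ∉ I) (h : ∀ p, G.dir p v → M.solve I x ω p = y p) :
    M.solve I x ω v = M.f v y ω := by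
  rw [M.solve_spec, if_neg hv]
  exact M.f_parents v _ _ ω h

lemma forall_solve_eq_iff {I T : Finset V} (hTI : Disjoint T I) (hpa : G.parentsF T ⊆ I)
    (y : V → Val) (ω : M.L → M.NVal) :
    (∀ v ∈ T, M.solve I y ω v = y v) ↔ ∀ v ∈ T, M.f v y ω = y v := by
  have solve_eq : ∀ v ∈ T, (∀ p, G.dir p v → p ∈ T → M.solve I y ω p = y p) →
      M.solve I y ω v = M.f v y ω := by
    refine fun v hv h => M.solve_eq_f_of_parents (Finset.disjoint_left.1 hTI hv) fun p hp => ?_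
    by_cases hpT : p ∈ T
    · exact h p hp hpT
    · have hpI : p ∈ I := hpa (by simpa [ADMG.parentsF] using ⟨hpT, v, hv, hp⟩)
      rw [M.solve_spec, if_pos hpI]
  constructor
  · exact fun h v hv => solve_eq v hv (fun p _ hp => h p hp) ▸ h v hv
  · intro h v
    induction v using G.wellFounded_dir.induction with
    | _ v ih => exact fun hv => (solve_eq v hv fun p hp hpT => ih p hp hpT).trans (h v hv)

lemma Pm_eq_cFactor {I T : Finset V} (hTI : Disjoint T I) (hpa : G.parentsF T ⊆ I)
    (y : V → Val) : M.Pm I y T y = M.cFactor T y := by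
  rw [Pm_eq_prob, cFactor]
  simp only [M.forall_solve_eq_iff hTI hpa]

lemma P_eq_cFactor_univ (y : V → Val) : M.P ∅ y y = M.cFactor Finset.univ y := by
  rw [← M.Pm_eq_cFactor (Finset.disjoint_empty_right _) (by simp [ADMG.parentsF]), P_eq_prob,
    Pm_eq_prob]
  simp [funext_iff]

lemma cFactor_le_of_subset {S T : Finset V} (h : S ⊆ T) (y : V → Val) :
    M.cFactor T y ≤ M.cFactor S y :=
  M.prob_mono fun _ hT v hv => hT v (h hv)

lemma P_le_cFactor (S : Finset V) (y : V → Val) : M.P ∅ y y ≤ M.cFactor S y :=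
  M.P_eq_cFactor_univ y ▸ M.cFactor_le_of_subset (Finset.subset_univ S) y

/-- A latent read on both sides would force a bidirected edge, so the two events depend on
disjoint sets of independent latents. -/
lemma cFactor_union {A B : Finset V} (hAB : Disjoint A B)
    (hbi : ∀ v ∈ A, ∀ w ∈ B, ¬ G.bidir v w) (y : V → Val) :
    M.cFactor (A ∪ B) y = M.cFactor A y * M.cFactor B y := by
  simp only [cFactor, Finset.forall_mem_union]
  refine M.prob_and_eq_mul (fun l => ∃ v ∈ A, M.reads v l) (fun ω ω' h => ?_) fun ω ω' h => ?_
  · refine forall₂_congr fun v hv => ?_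
    rw [M.f_latents v y ω ω' fun l hl => h l ⟨v, hv, hl⟩]
  · refine forall₂_congr fun w hw => ?_
    have not_read_by_A (l : M.L) (hl : M.reads w l) : ¬ ∃ v ∈ A, M.reads v l :=
      fun ⟨v, hv, hvl⟩ => hbi v hv w hw
        (M.semiMarkov v w l (ne_of_mem_of_not_mem hv (Finset.disjoint_right.1 hAB hw)) hvl hl)
    rw [M.f_latents w y ω ω' fun l hl => h l (not_read_by_A l hl)]

lemma cFactor_erase_eq_sum {S : Finset V} {v : V} (hv : v ∈ S)
    (hchild : ∀ w ∈ S, ¬ G.dir v w) (y : V → Val) :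
    M.cFactor (S.erase v) y = ∑ c, M.cFactor S (Function.update y v c) := by
  rw [cFactor, ← M.sum_prob_and_eq _ (M.f v y)]
  refine Finset.sum_congr rfl fun c _ => congrArg M.prob (funext fun ω => propext ?_)
  conv_rhs => rw [← Finset.insert_erase hv]
  rw [Finset.forall_mem_insert, Function.update_self, M.f_update_of_not_dir (hchild v hv)]
  refine and_comm.trans (and_congr Iff.rfl (forall₂_congr fun w hw => ?_))
  rw [M.f_update_of_not_dir (hchild w (Finset.mem_of_mem_erase hw)),
    Function.update_of_ne (Finset.ne_of_mem_erase hw)]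

end SCM

end

namespace G5

variable {Val : Type} [Fintype Val] (M : SCM (Fin 5) Val G5) (y : Fin 5 → Val)

lemma P_eq_cFactor_mul : M.P ∅ y y = M.cFactor {0, 1, 2} y * M.cFactor {3, 4} y := by
  rw [M.P_eq_cFactor_univ, ← M.cFactor_union (by decide) (by simp [G5])]
  rfl

lemma Pm_eq_cFactor_mul :
    M.Pm ∅ y {3, 4, 0, 2} y = M.cFactor {0, 2} y * M.cFactor {3, 4} y := by
  rw [M.Pm_eq_cFactor (Finset.disjoint_empty_right _)
      (fun p => by simp [ADMG.parentsF, G5]; omega),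
    ← M.cFactor_union (by decide) (by simp [G5])]
  congr 1
  decide

lemma Pm_do_eq_cFactor : M.Pm {3} y {0, 1, 2} y = M.cFactor {0, 1, 2} y :=
  M.Pm_eq_cFactor (by decide) (fun p => by simp [ADMG.parentsF, G5]; omega) y

lemma cond_eq_cFactor (h : 0 < M.P ∅ y y) :
    M.cond ∅ y {0, 1, 2} {3} y = M.cFactor {0, 1, 2} y := by
  rw [SCM.cond, M.Pm_eq_cFactor (Finset.disjoint_empty_right _)
      (fun p => by simp [ADMG.parentsF, G5]; omega),
    M.Pm_eq_cFactor (Finset.disjoint_empty_right _) (fun p => by simp [ADMG.parentsF, G5]),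
    M.cFactor_union (by decide) (by simp [G5]),
    mul_div_cancel_right₀ _ (h.trans_le (M.P_le_cFactor _ y)).ne']

lemma cFactor_eq_sum :
    M.cFactor {0, 2} y = ∑ c, M.cFactor {0, 1, 2} (Function.update y 1 c) := by
  rw [← M.cFactor_erase_eq_sum (by decide) (by simp [G5])]
  congr 1

end G5

theorem modular_matching_implies_joint_matching_general
    {Val : Type} [Fintype Val]
    (M1 M2 : SCM (Fin 5) Val G5) (h1 : M1.positive)
    (hz : ∀ y : Fin 5 → Val,
      M1.cond ∅ y ({0, 1, 2} : Finset (Fin 5)) ({3} : Finset (Fin 5)) y =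
        M2.Pm ({3} : Finset (Fin 5)) y ({0, 1, 2} : Finset (Fin 5)) y)
    (hx : ∀ y : Fin 5 → Val,
      M1.Pm ∅ y ({3, 4, 0, 2} : Finset (Fin 5)) y =
        M2.Pm ∅ y ({3, 4, 0, 2} : Finset (Fin 5)) y) :
    ∀ y : Fin 5 → Val, M1.P ∅ y y = M2.P ∅ y y := by
  have hZ : ∀ y, M1.cFactor {0, 1, 2} y = M2.cFactor {0, 1, 2} y := fun y => by
    rw [← G5.cond_eq_cFactor M1 y (h1 y y), hz, G5.Pm_do_eq_cFactor]
  intro y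
  have hZ13 : M1.cFactor {0, 2} y = M2.cFactor {0, 2} y := by
    simp only [G5.cFactor_eq_sum, hZ]
  have hZ13_ne : M1.cFactor {0, 2} y ≠ 0 := ((h1 y y).trans_le (M1.P_le_cFactor _ y)).ne'
  have hX : M1.cFactor {3, 4} y = M2.cFactor {3, 4} y := by
    refine mul_left_cancel₀ hZ13_ne ?_
    rw [← G5.Pm_eq_cFactor_mul, hZ13, ← G5.Pm_eq_cFactor_mul, hx]
  rw [G5.P_eq_cFactor_mul, G5.P_eq_cFactor_mul, hZ, hX]

/-- in the graph `G5`, any two strictly positive SCMs `P` (= `M1`)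
and `Q` (= `M2`) with `P(z₁,z₂,z₃ | x₁) = Q(z₁,z₂,z₃ | do(x₁))` and
`P(x₁,x₂,z₁,z₃) = Q(x₁,x₂,z₁,z₃)` have the same full joint distribution. -/
theorem modular_matching_implies_joint_matching
    {Val : Type} [Fintype Val]
    (M1 M2 : SCM (Fin 5) Val G5) (h1 : M1.positive) (h2 : M2.positive)
    (hz : ∀ y : Fin 5 → Val,
      M1.cond ∅ y ({0, 1, 2} : Finset (Fin 5)) ({3} : Finset (Fin 5)) y =
        M2.Pm ({3} : Finset (Fin 5)) y ({0, 1, 2} : Finset (Fin 5)) y)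
    (hx : ∀ y : Fin 5 → Val,
      M1.Pm ∅ y ({3, 4, 0, 2} : Finset (Fin 5)) y =
        M2.Pm ∅ y ({3, 4, 0, 2} : Finset (Fin 5)) y) :
    ∀ y : Fin 5 → Val, M1.P ∅ y y = M2.P ∅ y y :=
  modular_matching_implies_joint_matching_general M1 M2 h1 hz hx
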